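/- Let I be a symmetric positive definite 3×3 inertia matrix, K_R = diag(k₁,k₂,k₃) positive, Ψ(R_e) = (1/2)tr(K_R(I₃ − R_e)), and consider the closed-loop attitude error dynamics with control torque τ_c = −R_dᵀe_R − K_ω e_ω + I·ω̇_d + ω_d × I·ω applied to I·ω̇ = −ω × I·ω + τ_c. Then along trajectories, the function V_R = (1/2)e_ωᵀ·I·e_ω + Ψ(R_e) satisfies V̇_R = −e_ωᵀ·K_ω·e_ω ≤ 0. -/

import Mathlib

/-! Along the flow, `V̇ = e_ω ⬝ I ė_ω + dΨ/dt`. The kinematics give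
`d/dt (R R_dᵀ) = R hat(e_ω) R_dᵀ`, and `tr (A hat x) = -2 x ⬝ vee (skew A)` together with the
equivariance `Qᵀ hat(Q x) Q = hat x` of `hat` under `Q ∈ SO(3)` turn `dΨ/dt` into
`e_ω ⬝ R_dᵀ e_R`, which cancels the feedback term `-R_dᵀ e_R` of the torque. The gyroscopic terms
contribute `e_ω ⬝ (e_ω × I ω) = 0`, so only `-e_ω ⬝ K_ω e_ω` survives. -/

open Matrix

noncomputable section

/-- The special orthogonal group SO(3) as a set of real 3×3 matrices. -/
def SO3 : Set (Matrix (Fin 3) (Fin 3) ℝ) := {R | Rᵀ * R = 1 ∧ R.det = 1}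

/-- The hat map: hat(x)·y = x × y. -/
def hat (x : Fin 3 → ℝ) : Matrix (Fin 3) (Fin 3) ℝ :=
  !![0, -x 2, x 1; x 2, 0, -x 0; -x 1, x 0, 0]

/-- The vee map, inverse of hat on skew-symmetric matrices. -/
def vee (A : Matrix (Fin 3) (Fin 3) ℝ) : Fin 3 → ℝ := ![A 2 1, A 0 2, A 1 0]

/-- Skew-symmetric part of a matrix. -/
def skew (A : Matrix (Fin 3) (Fin 3) ℝ) : Matrix (Fin 3) (Fin 3) ℝ := (1/2 : ℝ) • (A - Aᵀ)

/-- Euclidean norm on ℝ³. -/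
def norm3 (x : Fin 3 → ℝ) : ℝ := Real.sqrt (∑ i, x i ^ 2)

/-- Error navigation function Ψ(R) = ½ tr(K (I − R)). -/
def Psi (K R : Matrix (Fin 3) (Fin 3) ℝ) : ℝ := (1/2) * (K * (1 - R)).trace

section Calculus

variable {𝕜 : Type*} [NontriviallyNormedField 𝕜] {l m n : Type*} {t : 𝕜}

theorem HasDerivAt.dotProduct [Fintype n] {f g : 𝕜 → n → 𝕜} {f' g' : n → 𝕜}
    (hf : HasDerivAt f f' t) (hg : HasDerivAt g g' t) :
    HasDerivAt (fun s => f s ⬝ᵥ g s) (f' ⬝ᵥ g t + f t ⬝ᵥ g') t := by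
  change HasDerivAt (fun s => ∑ i, f s i * g s i) (∑ i, f' i * g t i + ∑ i, f t i * g' i) t
  rw [← Finset.sum_add_distrib]
  exact HasDerivAt.fun_sum fun i _ => (hasDerivAt_pi.1 hf i).mul (hasDerivAt_pi.1 hg i)

theorem HasDerivAt.const_mulVec [Fintype n] (A : Matrix m n 𝕜) {f : 𝕜 → n → 𝕜} {f' : n → 𝕜}
    (hf : HasDerivAt f f' t) : HasDerivAt (fun s => A *ᵥ f s) (A *ᵥ f') t :=
  hasDerivAt_pi.2 fun i => by
    simpa [Matrix.mulVec] using (hasDerivAt_const t fun j => A i j).dotProduct hf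

theorem HasDerivAt.dotProduct_mulVec_self [Fintype n] {A : Matrix n n 𝕜} (hA : A.IsSymm)
    {f : 𝕜 → n → 𝕜} {f' : n → 𝕜} (hf : HasDerivAt f f' t) :
    HasDerivAt (fun s => f s ⬝ᵥ A *ᵥ f s) (2 * (f t ⬝ᵥ A *ᵥ f')) t := by
  convert hf.dotProduct (hf.const_mulVec A) using 1
  rw [two_mul, dotProduct_comm f', dotProduct_mulVec, ← mulVec_transpose, hA.eq]

/-- Matrices carry no global normed structure in Mathlib, so matrix-valued curves are
differentiated entrywise. -/
def HasEntrywiseDerivAt (A : 𝕜 → Matrix m n 𝕜) (A' : Matrix m n 𝕜) (t : 𝕜) : Prop :=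
  ∀ i j, HasDerivAt (fun s => A s i j) (A' i j) t

namespace HasEntrywiseDerivAt

theorem const (A : Matrix m n 𝕜) : HasEntrywiseDerivAt (fun _ => A) 0 t :=
  fun _ _ => hasDerivAt_const t _

theorem const_sub {A : 𝕜 → Matrix m n 𝕜} {A' : Matrix m n 𝕜} (hA : HasEntrywiseDerivAt A A' t)
    (C : Matrix m n 𝕜) : HasEntrywiseDerivAt (fun s => C - A s) (-A') t :=
  fun i j => (hA i j).const_sub (C i j)

theorem transpose {A : 𝕜 → Matrix m n 𝕜} {A' : Matrix m n 𝕜} (hA : HasEntrywiseDerivAt A A' t) :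
    HasEntrywiseDerivAt (fun s => (A s)ᵀ) A'ᵀ t :=
  fun i j => hA j i

theorem mul [Fintype n] {A : 𝕜 → Matrix l n 𝕜} {B : 𝕜 → Matrix n m 𝕜} {A' : Matrix l n 𝕜}
    {B' : Matrix n m 𝕜}
    (hA : HasEntrywiseDerivAt A A' t) (hB : HasEntrywiseDerivAt B B' t) :
    HasEntrywiseDerivAt (fun s => A s * B s) (A' * B t + A t * B') t := fun i j => by
  simpa only [Matrix.add_apply, Matrix.mul_apply'] using
    (hasDerivAt_pi.2 (hA i)).dotProduct (hasDerivAt_pi.2 fun k => hB k j)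

theorem trace [Fintype n] {A : 𝕜 → Matrix n n 𝕜} {A' : Matrix n n 𝕜}
    (hA : HasEntrywiseDerivAt A A' t) :
    HasDerivAt (fun s => (A s).trace) A'.trace t :=
  HasDerivAt.fun_sum fun i _ => hA i i

end HasEntrywiseDerivAt

end Calculus

theorem hat_transpose (x : Fin 3 → ℝ) : (hat x)ᵀ = -hat x := by
  ext i j; fin_cases i <;> fin_cases j <;> simp [hat]

theorem hat_sub (x y : Fin 3 → ℝ) : hat (x - y) = hat x - hat y := by
  ext i j; fin_cases i <;> fin_cases j <;> simp [hat] <;> ring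

theorem vee_hat (x : Fin 3 → ℝ) : vee (hat x) = x := by
  funext i; fin_cases i <;> simp [vee, hat]

theorem hat_vee_skew (A : Matrix (Fin 3) (Fin 3) ℝ) : hat (vee (skew A)) = skew A := by
  ext i j; fin_cases i <;> fin_cases j <;> simp [hat, vee, skew] <;> ring

theorem skew_transpose_mul_mul (Q B : Matrix (Fin 3) (Fin 3) ℝ) :
    skew (Qᵀ * B * Q) = Qᵀ * skew B * Q := by
  simp only [skew, Matrix.transpose_mul, Matrix.transpose_transpose, Matrix.mul_smul,
    Matrix.smul_mul, Matrix.mul_sub, Matrix.sub_mul, Matrix.mul_assoc]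

theorem transpose_mul_hat_mulVec_mul (M : Matrix (Fin 3) (Fin 3) ℝ) (x : Fin 3 → ℝ) :
    Mᵀ * hat (M *ᵥ x) * M = M.det • hat x := by
  ext i j
  fin_cases i <;> fin_cases j <;>
    simp [hat, Matrix.mul_apply, Matrix.mulVec, dotProduct, Matrix.det_fin_three,
      Fin.sum_univ_succ] <;> ring

theorem trace_mul_hat (A : Matrix (Fin 3) (Fin 3) ℝ) (x : Fin 3 → ℝ) :
    (A * hat x).trace = -2 * (x ⬝ᵥ vee (skew A)) := by
  simp only [trace, hat, Fin.isValue, diag_apply, Matrix.mul_apply, of_apply, cons_val',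
    cons_val_fin_one, Fin.sum_univ_succ, cons_val_zero, cons_val_succ, Fin.succ_zero_eq_one,
    Finset.univ_unique, Fin.default_eq_zero, Finset.sum_singleton, Fin.succ_one_eq_two, mul_zero,
    mul_neg, zero_add, add_zero, dotProduct, vee, skew, one_div, Matrix.smul_apply,
    Matrix.sub_apply, transpose_apply, smul_eq_mul, neg_mul]
  ring

theorem vee_skew_transpose_mul_mul {Q : Matrix (Fin 3) (Fin 3) ℝ} (hQ : Q ∈ SO3)
    (B : Matrix (Fin 3) (Fin 3) ℝ) : vee (skew (Qᵀ * B * Q)) = Qᵀ *ᵥ vee (skew B) := by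
  have hQQt : Q * Qᵀ = 1 := mul_eq_one_comm.mp hQ.1
  have hconj := transpose_mul_hat_mulVec_mul Q (Qᵀ *ᵥ vee (skew B))
  rw [Matrix.mulVec_mulVec, hQQt, Matrix.one_mulVec, hat_vee_skew, hQ.2, one_smul] at hconj
  rw [skew_transpose_mul_mul, hconj, vee_hat]

theorem trace_mul_hat_mul_transpose {Q : Matrix (Fin 3) (Fin 3) ℝ} (hQ : Q ∈ SO3)
    (A : Matrix (Fin 3) (Fin 3) ℝ) (x : Fin 3 → ℝ) :
    -(1/2) * (A * hat x * Qᵀ).trace = x ⬝ᵥ Qᵀ *ᵥ vee (skew (A * Qᵀ)) := by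
  have hA : Qᵀ * (A * Qᵀ) * Q = Qᵀ * A := by
    rw [Matrix.mul_assoc, Matrix.mul_assoc, hQ.1, Matrix.mul_one]
  rw [Matrix.trace_mul_cycle, trace_mul_hat, ← hA, vee_skew_transpose_mul_mul hQ]
  ring

theorem hasEntrywiseDerivAt_mul_transpose_of_hat {R Rd : ℝ → Matrix (Fin 3) (Fin 3) ℝ}
    {ω ωd : Fin 3 → ℝ} {t : ℝ} (hR : HasEntrywiseDerivAt R (R t * hat ω) t)
    (hRd : HasEntrywiseDerivAt Rd (Rd t * hat ωd) t) :
    HasEntrywiseDerivAt (fun s => R s * (Rd s)ᵀ) (R t * hat (ω - ωd) * (Rd t)ᵀ) t := by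
  convert hR.mul hRd.transpose using 1
  rw [hat_sub, Matrix.transpose_mul, hat_transpose]
  noncomm_ring

theorem hasDerivAt_Psi (K : Matrix (Fin 3) (Fin 3) ℝ) {X : ℝ → Matrix (Fin 3) (Fin 3) ℝ}
    {X' : Matrix (Fin 3) (Fin 3) ℝ} {t : ℝ} (hX : HasEntrywiseDerivAt X X' t) :
    HasDerivAt (fun s => Psi K (X s)) (-(1/2) * (K * X').trace) t :=
  ((((HasEntrywiseDerivAt.const K).mul (hX.const_sub 1)).trace).const_mul (1/2 : ℝ)).congr_deriv
    (by simp)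

theorem hasDerivAt_Psi_mul_transpose {R Rd : ℝ → Matrix (Fin 3) (Fin 3) ℝ} {ω ωd : Fin 3 → ℝ}
    {t : ℝ} (K : Matrix (Fin 3) (Fin 3) ℝ) (hRdt : Rd t ∈ SO3)
    (hR : HasEntrywiseDerivAt R (R t * hat ω) t) (hRd : HasEntrywiseDerivAt Rd (Rd t * hat ωd) t) :
    HasDerivAt (fun s => Psi K (R s * (Rd s)ᵀ))
      ((ω - ωd) ⬝ᵥ (Rd t)ᵀ *ᵥ vee (skew (K * (R t * (Rd t)ᵀ)))) t := by
  convert hasDerivAt_Psi K (hasEntrywiseDerivAt_mul_transpose_of_hat hR hRd) using 1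
  rw [← Matrix.mul_assoc K, ← Matrix.mul_assoc K, ← Matrix.mul_assoc K,
    ← trace_mul_hat_mul_transpose hRdt]

theorem sub_dotProduct_cross_sub_cross (a b u : Fin 3 → ℝ) :
    (a - b) ⬝ᵥ (a ⨯₃ u - b ⨯₃ u) = 0 := by
  rw [← LinearMap.map_sub₂, dot_self_cross]

theorem stmt_11_general (Imat Kω : Matrix (Fin 3) (Fin 3) ℝ)
    (hI : Imat.PosDef) (hKω : Kω.PosDef)
    (k₁ k₂ k₃ : ℝ)
    (R Rd : ℝ → Matrix (Fin 3) (Fin 3) ℝ) (ω ωd ω' ωd' : ℝ → Fin 3 → ℝ)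
    (hRd : ∀ s, Rd s ∈ SO3)
    (hdR : ∀ s (i j : Fin 3), HasDerivAt (fun u => R u i j) ((R s * hat (ω s)) i j) s)
    (hdRd : ∀ s (i j : Fin 3), HasDerivAt (fun u => Rd u i j) ((Rd s * hat (ωd s)) i j) s)
    (hdω : ∀ s (i : Fin 3), HasDerivAt (fun u => ω u i) (ω' s i) s)
    (hdωd : ∀ s (i : Fin 3), HasDerivAt (fun u => ωd u i) (ωd' s i) s)
    (hdyn : ∀ s, Imat.mulVec (ω' s) =
      -(crossProduct (ω s) (Imat.mulVec (ω s))) +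
        (-(Rd s)ᵀ.mulVec (vee (skew (Matrix.diagonal ![k₁, k₂, k₃] * (R s * (Rd s)ᵀ)))) -
          Kω.mulVec (ω s - ωd s) + Imat.mulVec (ωd' s) +
          crossProduct (ωd s) (Imat.mulVec (ω s)))) :
    ∀ t : ℝ,
      HasDerivAt
        (fun s => (1/2) * ((ω s - ωd s) ⬝ᵥ Imat.mulVec (ω s - ωd s)) +
          Psi (Matrix.diagonal ![k₁, k₂, k₃]) (R s * (Rd s)ᵀ))
        (-((ω t - ωd t) ⬝ᵥ Kω.mulVec (ω t - ωd t))) t ∧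
      -((ω t - ωd t) ⬝ᵥ Kω.mulVec (ω t - ωd t)) ≤ 0 := by
  intro t
  have he : HasDerivAt (fun s => ω s - ωd s) (ω' t - ωd' t) t :=
    (hasDerivAt_pi.2 (hdω t)).sub (hasDerivAt_pi.2 (hdωd t))
  have hkinetic := (he.dotProduct_mulVec_self (isHermitian_iff_isSymm.1 hI.isHermitian)).const_mul
    (1/2 : ℝ)
  have hpotential := hasDerivAt_Psi_mul_transpose (diagonal ![k₁, k₂, k₃]) (hRd t) (hdR t) (hdRd t)
  refine ⟨(hkinetic.add hpotential).congr_deriv ?_,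
    neg_nonpos.2 (hKω.posSemidef.dotProduct_mulVec_nonneg _)⟩
  -- `ω × Iω - ω_d × Iω = e_ω × Iω` is orthogonal to `e_ω`.
  have hgyro := sub_dotProduct_cross_sub_cross (ω t) (ωd t) (Imat *ᵥ ω t)
  rw [Matrix.mulVec_sub, hdyn t]
  simp only [dotProduct_add, dotProduct_sub, dotProduct_neg] at hgyro ⊢
  linarith

/-- Along the closed-loop attitude error dynamics with torque
τ_c = −R_dᵀe_R − K_ω e_ω + I ω̇_d + ω_d × Iω, the Lyapunov function
V_R = ½ e_ωᵀ I e_ω + Ψ(R_e) satisfies V̇_R = −e_ωᵀ K_ω e_ω ≤ 0. -/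
theorem stmt_11 (Imat Kω : Matrix (Fin 3) (Fin 3) ℝ)
    (hI : Imat.PosDef) (hKω : Kω.PosDef)
    (k₁ k₂ k₃ : ℝ) (hk₁ : 0 < k₁) (hk₂ : 0 < k₂) (hk₃ : 0 < k₃)
    (R Rd : ℝ → Matrix (Fin 3) (Fin 3) ℝ) (ω ωd ω' ωd' : ℝ → Fin 3 → ℝ)
    (hR : ∀ s, R s ∈ SO3) (hRd : ∀ s, Rd s ∈ SO3)
    (hdR : ∀ s (i j : Fin 3), HasDerivAt (fun u => R u i j) ((R s * hat (ω s)) i j) s)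
    (hdRd : ∀ s (i j : Fin 3), HasDerivAt (fun u => Rd u i j) ((Rd s * hat (ωd s)) i j) s)
    (hdω : ∀ s (i : Fin 3), HasDerivAt (fun u => ω u i) (ω' s i) s)
    (hdωd : ∀ s (i : Fin 3), HasDerivAt (fun u => ωd u i) (ωd' s i) s)
    (hdyn : ∀ s, Imat.mulVec (ω' s) =
      -(crossProduct (ω s) (Imat.mulVec (ω s))) +
        (-(Rd s)ᵀ.mulVec (vee (skew (Matrix.diagonal ![k₁, k₂, k₃] * (R s * (Rd s)ᵀ)))) -
          Kω.mulVec (ω s - ωd s) + Imat.mulVec (ωd' s) +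
          crossProduct (ωd s) (Imat.mulVec (ω s)))) :
    ∀ t : ℝ,
      HasDerivAt
        (fun s => (1/2) * ((ω s - ωd s) ⬝ᵥ Imat.mulVec (ω s - ωd s)) +
          Psi (Matrix.diagonal ![k₁, k₂, k₃]) (R s * (Rd s)ᵀ))
        (-((ω t - ωd t) ⬝ᵥ Kω.mulVec (ω t - ωd t))) t ∧
      -((ω t - ωd t) ⬝ᵥ Kω.mulVec (ω t - ωd t)) ≤ 0 :=
  stmt_11_general Imat Kω hI hKω k₁ k₂ k₃ R Rd ω ωd ω' ωd' hRd hdR hdRd hdω hdωd hdyn
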